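/- Let α > -1, r > 0, and 0 < s < t, and let µ be a positive Borel measure on the unit disk 𝔻. Then there exist constants C₁, C > 0 such that for every a ∈ 𝔻: C₁ (1-|a|)^{-(α+2)} ∫_{D(a, r+s)} dµ(z) ≤ (1-|a|)^{-(α+2)} ∫_{D(a,r)} (1-|w|)^{-(α+2)} (∫_{D(w,t)} dµ(z)) dm_α(w) ≤ C (1-|a|)^{-(α+2)} ∫_{D(a, r+t)} dµ(z). -/

import Mathlib

open MeasureTheory Set
open scoped ENNReal

noncomputable section

/-- The open unit disk in the complex plane. -/
def unitDisk : Set ℂ := Metric.ball 0 1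

/-- Normalized Lebesgue area measure on ℂ (so that the unit disk has measure 1). -/
def m2 : Measure ℂ := (ENNReal.ofReal Real.pi)⁻¹ • volume

/-- The weighted measure `dm_α(z) = (1-|z|)^α dm₂(z)`. -/
def mA (α : ℝ) : Measure ℂ :=
  m2.withDensity fun z => ENNReal.ofReal ((1 - ‖z‖) ^ α)

/-- The Lusin cone `Γ_σ(ξ) = {z ∈ 𝔻 : |1 - ξ̄ z| < σ (1 - |z|)}`. -/
def lusinCone (σ : ℝ) (ξ : ℂ) : Set ℂ :=
  {z ∈ unitDisk | ‖1 - (starRingEnd ℂ) ξ * z‖ < σ * (1 - ‖z‖)}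

/-- The pseudo-hyperbolic distance `|φ_w(z)|` where `φ_w(z) = (w - z)/(1 - w̄ z)`. -/
def pseudoDist (z w : ℂ) : ℝ :=
  ‖(w - z) / (1 - (starRingEnd ℂ) w * z)‖

/-- The Bergman (hyperbolic) distance on the unit disk. -/
def bergmanDist (z w : ℂ) : ℝ :=
  (1 / 2) * Real.log ((1 + pseudoDist z w) / (1 - pseudoDist z w))

/-- The Bergman disk `D(a,t) = {w ∈ 𝔻 : d(w,a) < t}`. -/
def bergmanDisk (a : ℂ) (t : ℝ) : Set ℂ :=
  {w ∈ unitDisk | bergmanDist w a < t}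

/-- The Carleson box over the arc of the unit circle with midpoint `e^{iθ}` and arclength `h`. -/
def carlesonBox (θ h : ℝ) : Set ℂ :=
  {z : ℂ | 1 - h < ‖z‖ ∧ ‖z‖ < 1 ∧
    ∃ φ : ℝ, |φ - θ| < h / 2 ∧
      z = (‖z‖ : ℂ) * Complex.exp (φ * Complex.I)}

/-- Center of the Carleson box over the arc with midpoint `e^{iθ}` and arclength `h`. -/
def boxCenter (θ h : ℝ) : ℂ := ((1 - h / 2 : ℝ) : ℂ) * Complex.exp (θ * Complex.I)

/-- Arcs of the unit circle, parametrized by midpoint angle (first component)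
and arclength (second component). -/
def Arc : Type := {p : ℝ × ℝ // 0 < p.2 ∧ p.2 ≤ 2 * Real.pi}

/-- The weak Lorentz `L^{q,∞}` quasinorm of a function on the unit circle
(the circle being parametrized by arclength `φ ↦ e^{iφ}`, `φ ∈ [0, 2π)`). -/
def wnorm (q : ℝ) (g : ℂ → ℝ≥0∞) : ℝ≥0∞ :=
  ⨆ l : Ioi (0 : ℝ),
    ENNReal.ofReal l.1 *
      (volume {φ : ℝ | φ ∈ Ico 0 (2 * Real.pi) ∧
        ENNReal.ofReal l.1 < g (Complex.exp (φ * Complex.I))}) ^ (1 / q)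

/-- The dyadic-type region `Δ_z` attached to a point of the unit disk. -/
def dyadicRegion (z : ℂ) : Set ℂ :=
  {w : ℂ | |Complex.arg w - Complex.arg z| < 1 - ‖z‖ ∧
    (1 - ‖z‖) / 2 < 1 - ‖w‖ ∧
    1 - ‖w‖ < 2 * (1 - ‖z‖)}

/-!
Möbius invariance of the Bergman distance reduces everything to disks centred at `0`, and on
`D(a, r)` the quantity `1 - |w|` is comparable to `1 - |a|`. Against `dm_α` the weight
`(1 - |w|)^{-(α+2)}` is the density `(1 - |w|)^{-2} dm₂`, so every Bergman disk of fixed radius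
carries weighted mass between two positive constants, whatever its centre.

Upper bound: `D(w, t) ⊆ D(a, r + t)` for `w ∈ D(a, r)`, so the integrand is at most
`(1 - |w|)^{-(α+2)} μ(D(a, r + t))`.

Lower bound: cover the compact disk `D̄(0, r + s)` by finitely many `D(c, η)`; transporting by
`φ_a` covers `D(a, r + s)` by the same number of disks `D(φ_a c, η)`. Going along the geodesic
from `0` to `c` gives a point `w` with `D(φ_a w, η) ⊆ D(a, r)` and `D(φ_a c, η) ⊆ D(v, t)` for every
`v ∈ D(φ_a w, η)`, so each `μ(D(φ_a c, η))` is bounded by a fixed multiple of the integral.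
-/

open ComplexConjugate

namespace Real

lemma one_add_div_one_sub_pos {x : ℝ} (hx : x ∈ Ioo (-1) 1) : 0 < (1 + x) / (1 - x) :=
  div_pos (by linarith [hx.1]) (by linarith [hx.2])

lemma tanh_mem_Ioo (x : ℝ) : tanh x ∈ Ioo (-1) 1 := ⟨neg_one_lt_tanh x, tanh_lt_one x⟩

lemma tanh_nonneg {x : ℝ} (hx : 0 ≤ x) : 0 ≤ tanh x := by
  rw [tanh_eq_sinh_div_cosh]
  exact div_nonneg (sinh_nonneg_iff.2 hx) (cosh_pos x).le

lemma tanh_pos {x : ℝ} (hx : 0 < x) : 0 < tanh x := by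
  rw [tanh_eq_sinh_div_cosh]
  exact div_pos (sinh_pos_iff.2 hx) (cosh_pos x)

lemma artanh_le_add_artanh {p p₁ p₂ : ℝ} (hp : p ∈ Ico 0 1) (hp₁ : p₁ ∈ Ico 0 1)
    (hp₂ : p₂ ∈ Ico 0 1) (h : p * (1 + p₁ * p₂) ≤ p₁ + p₂) :
    artanh p ≤ artanh p₁ + artanh p₂ := by
  obtain ⟨hp0, hp1⟩ := hp
  obtain ⟨hp₁0, hp₁1⟩ := hp₁
  obtain ⟨hp₂0, hp₂1⟩ := hp₂
  rw [artanh_eq_half_log ⟨by linarith, hp1.le⟩, artanh_eq_half_log ⟨by linarith, hp₁1.le⟩,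
    artanh_eq_half_log ⟨by linarith, hp₂1.le⟩, ← mul_add,
    ← log_mul (one_add_div_one_sub_pos ⟨by linarith, hp₁1⟩).ne'
      (one_add_div_one_sub_pos ⟨by linarith, hp₂1⟩).ne']
  gcongr ?_ * log ?_
  rw [div_mul_div_comm, div_le_div_iff₀ (by linarith) (by nlinarith)]
  nlinarith

lemma artanh_sub_artanh {x y : ℝ} (hx : x ∈ Ioo (-1) 1) (hy : y ∈ Ioo (-1) 1) :
    artanh y - artanh x = artanh ((y - x) / (1 - x * y)) := by
  obtain ⟨hx0, hx1⟩ := hx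
  obtain ⟨hy0, hy1⟩ := hy
  have hxy : 0 < 1 - x * y := by nlinarith
  have hq : (y - x) / (1 - x * y) ∈ Ioo (-1) 1 := by
    constructor
    · rw [lt_div_iff₀ hxy]; nlinarith
    · rw [div_lt_one hxy]; nlinarith
  rw [artanh_eq_half_log (Ioo_subset_Icc_self ⟨hx0, hx1⟩),
    artanh_eq_half_log (Ioo_subset_Icc_self ⟨hy0, hy1⟩),
    artanh_eq_half_log (Ioo_subset_Icc_self hq),
    ← mul_sub, ← log_div (one_add_div_one_sub_pos ⟨hy0, hy1⟩).ne'
      (one_add_div_one_sub_pos ⟨hx0, hx1⟩).ne']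
  have hxy' : 1 - x * y ≠ 0 := hxy.ne'
  have e₁ : 1 + (y - x) / (1 - x * y) = (1 + y) * (1 - x) / (1 - x * y) := by
    rw [eq_div_iff hxy', add_mul, div_mul_cancel₀ _ hxy']; ring
  have e₂ : 1 - (y - x) / (1 - x * y) = (1 - y) * (1 + x) / (1 - x * y) := by
    rw [eq_div_iff hxy', sub_mul, div_mul_cancel₀ _ hxy']; ring
  rw [e₁, e₂, div_div_div_cancel_right₀ hxy', div_div_div_eq]

end Real

lemma mem_unitDisk {z : ℂ} : z ∈ unitDisk ↔ ‖z‖ < 1 := by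
  simp [unitDisk]

section PseudoHyperbolic

lemma one_sub_conj_mul_ne_zero {w z : ℂ} (hw : ‖w‖ < 1) (hz : ‖z‖ < 1) :
    1 - conj w * z ≠ 0 := by
  refine sub_ne_zero.2 fun h => ?_
  have : ‖conj w * z‖ < 1 := by
    rw [norm_mul, Complex.norm_conj]
    nlinarith [norm_nonneg w, norm_nonneg z]
  simp [← h] at this

lemma norm_one_sub_conj_mul_pos {w z : ℂ} (hw : ‖w‖ < 1) (hz : ‖z‖ < 1) :
    0 < ‖1 - conj w * z‖ :=
  norm_pos_iff.2 (one_sub_conj_mul_ne_zero hw hz)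

lemma normSq_one_sub_conj_mul_sub_normSq_sub (w z : ℂ) :
    Complex.normSq (1 - conj w * z) - Complex.normSq (w - z)
      = (1 - Complex.normSq w) * (1 - Complex.normSq z) := by
  simp only [Complex.normSq_apply, Complex.sub_re, Complex.sub_im, Complex.one_re,
    Complex.one_im, Complex.mul_re, Complex.mul_im, Complex.conj_re, Complex.conj_im]
  ring

lemma pseudoDist_eq (z w : ℂ) : pseudoDist z w = ‖w - z‖ / ‖1 - conj w * z‖ := by
  rw [pseudoDist, norm_div]

lemma pseudoDist_nonneg (z w : ℂ) : 0 ≤ pseudoDist z w := norm_nonneg _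

lemma pseudoDist_self (z : ℂ) : pseudoDist z z = 0 := by
  simp [pseudoDist]

lemma pseudoDist_zero_right (z : ℂ) : pseudoDist z 0 = ‖z‖ := by
  simp [pseudoDist]

lemma pseudoDist_comm (z w : ℂ) : pseudoDist z w = pseudoDist w z := by
  have h : ‖1 - conj w * z‖ = ‖1 - conj z * w‖ := by
    rw [← Complex.norm_conj (1 - conj w * z)]
    simp [mul_comm]
  rw [pseudoDist_eq, pseudoDist_eq, norm_sub_rev, h]

lemma pseudoDist_lt_one {z w : ℂ} (hz : ‖z‖ < 1) (hw : ‖w‖ < 1) : pseudoDist z w < 1 := by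
  rw [pseudoDist_eq, div_lt_one (norm_one_sub_conj_mul_pos hw hz),
    ← sq_lt_sq₀ (norm_nonneg _) (norm_nonneg _), Complex.sq_norm, Complex.sq_norm]
  have hw2 : Complex.normSq w < 1 := by
    rw [Complex.normSq_eq_norm_sq]; nlinarith [norm_nonneg w]
  have hz2 : Complex.normSq z < 1 := by
    rw [Complex.normSq_eq_norm_sq]; nlinarith [norm_nonneg z]
  nlinarith [normSq_one_sub_conj_mul_sub_normSq_sub w z]

/-- The involutive automorphism `φ_a` of the unit disk exchanging `a` and `0`. -/
def mobius (a z : ℂ) : ℂ := (a - z) / (1 - conj a * z)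

lemma norm_mobius (a z : ℂ) : ‖mobius a z‖ = pseudoDist z a := rfl

lemma mobius_zero (a : ℂ) : mobius a 0 = a := by
  simp [mobius]

lemma norm_mobius_lt_one {a z : ℂ} (ha : ‖a‖ < 1) (hz : ‖z‖ < 1) : ‖mobius a z‖ < 1 :=
  pseudoDist_lt_one hz ha

lemma mobius_mobius {a z : ℂ} (ha : ‖a‖ < 1) (hz : ‖z‖ < 1) : mobius a (mobius a z) = z := by
  have h1 : 1 - z * conj a ≠ 0 := by rw [mul_comm]; exact one_sub_conj_mul_ne_zero ha hz
  have h2 := one_sub_conj_mul_ne_zero ha (norm_mobius_lt_one ha hz)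
  unfold mobius at h2 ⊢
  rw [div_eq_iff h2]
  field_simp
  ring

lemma pseudoDist_mobius {u x y : ℂ} (hu : ‖u‖ < 1) (hx : ‖x‖ < 1) (hy : ‖y‖ < 1) :
    pseudoDist (mobius u x) (mobius u y) = pseudoDist x y := by
  have hx₁ := one_sub_conj_mul_ne_zero hu hx
  have hy₁ := one_sub_conj_mul_ne_zero hu hy
  have hx₂ : 1 - x * conj u ≠ 0 := by rwa [mul_comm]
  have hy₂ : 1 - y * conj u ≠ 0 := by rwa [mul_comm]
  have hu₁ : 1 - u * conj u ≠ 0 := by rw [mul_comm]; exact one_sub_conj_mul_ne_zero hu hu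
  have hconj : conj (1 - conj u * y) = 1 - u * conj y := by simp
  have hy₃ : 1 - u * conj y ≠ 0 := by rw [← hconj]; exact (map_ne_zero _).2 hy₁
  have hy₄ : 1 - conj y * u ≠ 0 := by rwa [mul_comm]
  have hnum : mobius u y - mobius u x
      = (x - y) * (1 - u * conj u) / ((1 - conj u * x) * (1 - conj u * y)) := by
    unfold mobius; field_simp; ring
  have hden : 1 - conj (mobius u y) * mobius u x
      = (1 - u * conj u) * (1 - conj y * x) / ((1 - u * conj y) * (1 - conj u * x)) := by
    unfold mobius
    rw [map_div₀, hconj, map_sub]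
    field_simp
    ring
  have hnorm : ‖1 - u * conj y‖ = ‖1 - conj u * y‖ := by rw [← hconj, Complex.norm_conj]
  have := norm_pos_iff.2 hu₁
  have := norm_pos_iff.2 hx₁
  have := norm_pos_iff.2 hy₁
  rw [pseudoDist, pseudoDist_eq, hnum, hden]
  simp only [norm_div, norm_mul, hnorm, norm_sub_rev x y]
  field_simp

lemma pseudoDist_mul_le_of_zero {p q : ℂ} (hp : ‖p‖ < 1) (hq : ‖q‖ < 1) :
    pseudoDist p q * (1 + ‖p‖ * ‖q‖) ≤ ‖p‖ + ‖q‖ := by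
  set u := (q * conj p).re
  have hu : -(‖p‖ * ‖q‖) ≤ u := by
    have := Complex.abs_re_le_norm (q * conj p)
    rw [norm_mul, Complex.norm_conj] at this
    linarith [abs_le.1 this]
  have hnum : ‖q - p‖ ^ 2 = ‖q‖ ^ 2 + ‖p‖ ^ 2 - 2 * u := by
    simp only [Complex.sq_norm, Complex.normSq_sub, u]
  have hden : ‖1 - conj q * p‖ ^ 2 = 1 + ‖q‖ ^ 2 * ‖p‖ ^ 2 - 2 * u := by
    have : (1 * conj (conj q * p)).re = u := by simp [u, mul_comm]
    simp only [Complex.sq_norm, Complex.normSq_sub, this, Complex.normSq_one, Complex.normSq_mul,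
      Complex.normSq_conj]
  rw [pseudoDist_eq, div_mul_eq_mul_div, div_le_iff₀ (norm_one_sub_conj_mul_pos hq hp),
    ← pow_le_pow_iff_left₀ (by positivity) (by positivity) two_ne_zero, mul_pow, mul_pow, hnum,
    hden]
  nlinarith [mul_nonneg (mul_nonneg (sub_nonneg.2 hp.le) (sub_nonneg.2 hq.le))
      (neg_le_iff_add_nonneg.1 hu),
    norm_nonneg p, norm_nonneg q, mul_nonneg (norm_nonneg p) (norm_nonneg q)]

lemma pseudoDist_mul_le {x y u : ℂ} (hx : ‖x‖ < 1) (hy : ‖y‖ < 1) (hu : ‖u‖ < 1) :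
    pseudoDist x y * (1 + pseudoDist x u * pseudoDist u y)
      ≤ pseudoDist x u + pseudoDist u y := by
  rw [← pseudoDist_mobius hu hx hy, ← norm_mobius u x, pseudoDist_comm u y, ← norm_mobius u y]
  exact pseudoDist_mul_le_of_zero (norm_mobius_lt_one hu hx) (norm_mobius_lt_one hu hy)

end PseudoHyperbolic

section BergmanDistance

lemma bergmanDist_eq_artanh {z w : ℂ} (hz : ‖z‖ < 1) (hw : ‖w‖ < 1) :
    bergmanDist z w = Real.artanh (pseudoDist z w) := by
  rw [bergmanDist, Real.artanh_eq_half_log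
    ⟨by linarith [pseudoDist_nonneg z w], (pseudoDist_lt_one hz hw).le⟩]

lemma bergmanDist_zero_right {z : ℂ} (hz : ‖z‖ < 1) : bergmanDist z 0 = Real.artanh ‖z‖ := by
  rw [bergmanDist_eq_artanh hz (by simp), pseudoDist_zero_right]

lemma bergmanDist_self (z : ℂ) : bergmanDist z z = 0 := by
  simp [bergmanDist, pseudoDist_self]

lemma bergmanDist_comm (z w : ℂ) : bergmanDist z w = bergmanDist w z := by
  rw [bergmanDist, bergmanDist, pseudoDist_comm]

lemma bergmanDist_mobius {u x y : ℂ} (hu : ‖u‖ < 1) (hx : ‖x‖ < 1) (hy : ‖y‖ < 1) :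
    bergmanDist (mobius u x) (mobius u y) = bergmanDist x y := by
  rw [bergmanDist, bergmanDist, pseudoDist_mobius hu hx hy]

lemma bergmanDist_triangle {x y u : ℂ} (hx : ‖x‖ < 1) (hy : ‖y‖ < 1) (hu : ‖u‖ < 1) :
    bergmanDist x y ≤ bergmanDist x u + bergmanDist u y := by
  rw [bergmanDist_eq_artanh hx hy, bergmanDist_eq_artanh hx hu, bergmanDist_eq_artanh hu hy]
  exact Real.artanh_le_add_artanh ⟨pseudoDist_nonneg _ _, pseudoDist_lt_one hx hy⟩
    ⟨pseudoDist_nonneg _ _, pseudoDist_lt_one hx hu⟩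
    ⟨pseudoDist_nonneg _ _, pseudoDist_lt_one hu hy⟩ (pseudoDist_mul_le hx hy hu)

lemma bergmanDist_lt_iff {z w : ℂ} (hz : ‖z‖ < 1) (hw : ‖w‖ < 1) {ρ : ℝ} :
    bergmanDist z w < ρ ↔ pseudoDist z w < Real.tanh ρ := by
  have h := Real.artanh_lt_artanh_iff
    ⟨by linarith [pseudoDist_nonneg z w], pseudoDist_lt_one hz hw⟩
    (Real.tanh_mem_Ioo ρ)
  rwa [Real.artanh_tanh, ← bergmanDist_eq_artanh hz hw] at h

lemma bergmanDist_ofReal_mul_self {c : ℂ} (hc : ‖c‖ < 1) {t : ℝ} (ht₀ : 0 ≤ t) (ht₁ : t ≤ 1) :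
    bergmanDist c (t * c) = bergmanDist c 0 - bergmanDist (t * c) 0 := by
  have htc : ‖(t : ℂ) * c‖ = t * ‖c‖ := by
    rw [norm_mul, Complex.norm_real, Real.norm_of_nonneg ht₀]
  have htc₁ : ‖(t : ℂ) * c‖ < 1 := by
    rw [htc]; nlinarith [norm_nonneg c]
  have hnum : ‖(t : ℂ) * c - c‖ = ‖c‖ - t * ‖c‖ := by
    rw [show (t : ℂ) * c - c = ((t - 1 : ℝ) : ℂ) * c by push_cast; ring, norm_mul,
      Complex.norm_real, Real.norm_of_nonpos (by linarith)]
    ring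
  have hden : ‖1 - conj ((t : ℂ) * c) * c‖ = 1 - t * ‖c‖ * ‖c‖ := by
    rw [show 1 - conj ((t : ℂ) * c) * c = ((1 - t * ‖c‖ * ‖c‖ : ℝ) : ℂ) by
        rw [map_mul, Complex.conj_ofReal, mul_assoc, Complex.conj_mul']; push_cast; ring,
      Complex.norm_real, Real.norm_of_nonneg (by nlinarith [norm_nonneg c])]
  rw [bergmanDist_zero_right hc, bergmanDist_zero_right htc₁, htc,
    Real.artanh_sub_artanh ⟨by nlinarith [norm_nonneg c], by nlinarith [norm_nonneg c]⟩
      ⟨by linarith [norm_nonneg c], hc⟩,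
    bergmanDist_eq_artanh hc htc₁, pseudoDist_eq, hnum, hden]

lemma exists_bergmanDist_le_of_le_add {c : ℂ} (hc : ‖c‖ < 1) {ρ σ : ℝ} (hρ : 0 ≤ ρ)
    (hσ : 0 ≤ σ) (h : bergmanDist c 0 ≤ ρ + σ) :
    ∃ w, ‖w‖ < 1 ∧ bergmanDist w 0 ≤ ρ ∧ bergmanDist c w ≤ σ := by
  by_cases hcρ : bergmanDist c 0 ≤ ρ
  · exact ⟨c, hc, hcρ, by rw [bergmanDist_self]; exact hσ⟩
  have hρc : Real.tanh ρ < ‖c‖ := by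
    rw [← Real.artanh_lt_artanh_iff (Real.tanh_mem_Ioo ρ) ⟨by linarith [norm_nonneg c], hc⟩,
      Real.artanh_tanh, ← bergmanDist_zero_right hc]
    exact lt_of_not_ge hcρ
  have hc₀ : 0 < ‖c‖ := (Real.tanh_nonneg hρ).trans_lt hρc
  set t := Real.tanh ρ / ‖c‖
  have htc : ‖(t : ℂ) * c‖ = Real.tanh ρ := by
    rw [norm_mul, Complex.norm_real, Real.norm_of_nonneg (by positivity [Real.tanh_nonneg hρ]),
      div_mul_cancel₀ _ hc₀.ne']
  have hw : bergmanDist ((t : ℂ) * c) 0 = ρ := by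
    rw [bergmanDist_zero_right (htc ▸ Real.tanh_lt_one ρ), htc, Real.artanh_tanh]
  refine ⟨t * c, htc ▸ Real.tanh_lt_one ρ, hw.le, ?_⟩
  rw [bergmanDist_ofReal_mul_self hc (div_nonneg (Real.tanh_nonneg hρ) hc₀.le)
    ((div_le_one hc₀).2 hρc.le), hw]
  linarith

lemma measurableSet_bergmanDisk (a : ℂ) (ρ : ℝ) : MeasurableSet (bergmanDisk a ρ) := by
  unfold bergmanDisk bergmanDist pseudoDist unitDisk
  measurability

end BergmanDistance

section BergmanDisk

lemma mem_bergmanDisk_iff {a w : ℂ} (ha : ‖a‖ < 1) {ρ : ℝ} :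
    w ∈ bergmanDisk a ρ ↔ ‖w‖ < 1 ∧ pseudoDist w a < Real.tanh ρ := by
  refine ⟨fun ⟨hw, h⟩ => ?_, fun ⟨hw, h⟩ => ?_⟩
  · rw [mem_unitDisk] at hw
    exact ⟨hw, (bergmanDist_lt_iff hw ha).1 h⟩
  · exact ⟨mem_unitDisk.2 hw, (bergmanDist_lt_iff hw ha).2 h⟩

lemma bergmanDisk_subset_bergmanDisk {a b : ℂ} (ha : ‖a‖ < 1) (hb : ‖b‖ < 1) {ρ σ : ℝ}
    (h : ρ + bergmanDist a b ≤ σ) : bergmanDisk a ρ ⊆ bergmanDisk b σ := by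
  rintro z ⟨hz, hza⟩
  refine ⟨hz, ?_⟩
  linarith [bergmanDist_triangle (mem_unitDisk.1 hz) hb ha]

lemma mobius_mem_bergmanDisk_iff {a z c : ℂ} (ha : ‖a‖ < 1) (hz : ‖z‖ < 1) (hc : ‖c‖ < 1)
    {ρ : ℝ} : mobius a z ∈ bergmanDisk c ρ ↔ z ∈ bergmanDisk (mobius a c) ρ := by
  have hmz := norm_mobius_lt_one ha hz
  simp only [bergmanDisk, mem_ofPred_eq, mem_unitDisk, hz, hmz, true_and]
  rw [← bergmanDist_mobius ha hmz hc, mobius_mobius ha hz]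

lemma one_sub_norm_lt_of_mem_bergmanDisk {a w : ℂ} (ha : ‖a‖ < 1) {r : ℝ}
    (hw : w ∈ bergmanDisk a r) : (1 - Real.tanh r ^ 2) / 4 * (1 - ‖a‖) < 1 - ‖w‖ := by
  obtain ⟨hw, h⟩ := (mem_bergmanDisk_iff ha).1 hw
  set k := Real.tanh r
  have hk₀ : 0 ≤ k := (pseudoDist_nonneg w a).trans h.le
  have hk₁ : k < 1 := Real.tanh_lt_one r
  rw [pseudoDist_eq, div_lt_iff₀ (norm_one_sub_conj_mul_pos ha hw)] at h
  have hsq : ‖1 - conj a * w‖ ^ 2 - ‖a - w‖ ^ 2 = (1 - ‖a‖ ^ 2) * (1 - ‖w‖ ^ 2) := by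
    simp only [Complex.sq_norm]
    exact normSq_one_sub_conj_mul_sub_normSq_sub a w
  have hden : 1 - ‖a‖ ≤ ‖1 - conj a * w‖ := by
    have : ‖conj a * w‖ ≤ ‖a‖ := by
      rw [norm_mul, Complex.norm_conj]
      nlinarith [norm_nonneg a, norm_nonneg w]
    linarith [norm_sub_norm_le 1 (conj a * w), norm_one (α := ℂ)]
  have ha₀ := norm_nonneg a
  have hw₀ := norm_nonneg w
  have hstep : (1 - k ^ 2) * (1 - ‖a‖) ^ 2 < (1 - ‖a‖ ^ 2) * (1 - ‖w‖ ^ 2) := by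
    have : (1 - ‖a‖) ^ 2 ≤ ‖1 - conj a * w‖ ^ 2 := by nlinarith
    nlinarith [mul_le_mul_of_nonneg_left this (by nlinarith : (0 : ℝ) ≤ 1 - k ^ 2),
      norm_nonneg (a - w)]
  nlinarith [mul_nonneg (mul_nonneg (sub_nonneg.2 ha.le) (sub_nonneg.2 hw.le))
    (by nlinarith : (0 : ℝ) ≤ 4 - (1 + ‖a‖) * (1 + ‖w‖)), mul_pos (sub_pos.2 ha) (sub_pos.2 hw)]

lemma bergmanDisk_subset_ball {a : ℂ} (ha : ‖a‖ < 1) (r : ℝ) :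
    bergmanDisk a r ⊆
      Metric.ball a (2 * Real.tanh r / (1 - Real.tanh r) * (1 - ‖a‖)) := by
  intro w hw
  obtain ⟨hw, h⟩ := (mem_bergmanDisk_iff ha).1 hw
  set k := Real.tanh r
  have hk₀ : 0 ≤ k := (pseudoDist_nonneg w a).trans h.le
  have hk₁ : k < 1 := Real.tanh_lt_one r
  rw [pseudoDist_eq, div_lt_iff₀ (norm_one_sub_conj_mul_pos ha hw)] at h
  have hsplit : ‖1 - conj a * w‖ ≤ (1 - ‖a‖ ^ 2) + ‖a - w‖ := by
    have hnorm : ‖1 - conj a * a‖ = 1 - ‖a‖ ^ 2 := by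
      rw [mul_comm, Complex.mul_conj', ← Complex.ofReal_pow, ← Complex.ofReal_one,
        ← Complex.ofReal_sub, Complex.norm_real, Real.norm_of_nonneg (by nlinarith [norm_nonneg a])]
    have : ‖conj a * (a - w)‖ ≤ ‖a - w‖ := by
      rw [norm_mul, Complex.norm_conj]
      nlinarith [norm_nonneg (a - w), norm_nonneg a]
    calc ‖1 - conj a * w‖ = ‖(1 - conj a * a) + conj a * (a - w)‖ := by ring_nf
      _ ≤ ‖1 - conj a * a‖ + ‖conj a * (a - w)‖ := norm_add_le _ _
      _ ≤ (1 - ‖a‖ ^ 2) + ‖a - w‖ := by linarith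
  rw [Metric.mem_ball, dist_eq_norm, norm_sub_rev, div_mul_eq_mul_div,
    lt_div_iff₀ (by linarith)]
  nlinarith [norm_nonneg (a - w), norm_nonneg a, mul_le_mul_of_nonneg_left hsplit hk₀,
    mul_nonneg hk₀ (sq_nonneg (1 - ‖a‖))]

lemma ball_subset_bergmanDisk {a : ℂ} (ha : ‖a‖ < 1) (η : ℝ) :
    Metric.ball a (Real.tanh η * (1 - ‖a‖)) ⊆ bergmanDisk a η := by
  intro w hw
  rw [Metric.mem_ball, dist_eq_norm] at hw
  set ε := Real.tanh η
  have hε₁ : ε < 1 := Real.tanh_lt_one η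
  have ha₀ := norm_nonneg a
  have hε₀ : 0 < ε := by
    by_contra! h
    nlinarith [norm_nonneg (w - a)]
  have hwa : ‖w‖ ≤ ‖a‖ + ‖w - a‖ := by
    simpa using norm_add_le a (w - a)
  have hw₁ : ‖w‖ < 1 := by nlinarith
  refine (mem_bergmanDisk_iff ha).2 ⟨hw₁, ?_⟩
  have hden : 1 - ‖a‖ ≤ ‖1 - conj a * w‖ := by
    have : ‖conj a * w‖ ≤ ‖a‖ * (‖a‖ + ε * (1 - ‖a‖)) := by
      rw [norm_mul, Complex.norm_conj]
      exact mul_le_mul_of_nonneg_left (by linarith) ha₀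
    nlinarith [norm_sub_norm_le 1 (conj a * w), norm_one (α := ℂ),
      mul_nonneg (mul_nonneg ha₀ (by linarith : (0 : ℝ) ≤ 1 - ‖a‖))
        (by linarith : (0 : ℝ) ≤ 1 - ε)]
  rw [pseudoDist_eq, div_lt_iff₀ (norm_one_sub_conj_mul_pos ha hw₁), norm_sub_rev]
  nlinarith

lemma exists_finset_bergmanDisk_cover (ρ : ℝ) {η : ℝ} (hη : 0 < η) :
    ∃ F : Finset ℂ, (∀ c ∈ F, ‖c‖ ≤ Real.tanh ρ) ∧
      ∀ a : ℂ, ‖a‖ < 1 → bergmanDisk a ρ ⊆ ⋃ c ∈ F, bergmanDisk (mobius a c) η := by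
  have hρ := Real.tanh_lt_one ρ
  obtain ⟨F, hFρ, hcover⟩ := (isCompact_closedBall (0 : ℂ) (Real.tanh ρ)).elim_nhds_subcover
    (fun c => bergmanDisk c η) fun c hc => by
      have hc : ‖c‖ < 1 := by rw [mem_closedBall_zero_iff] at hc; linarith
      exact Filter.mem_of_superset
        (Metric.ball_mem_nhds c (mul_pos (Real.tanh_pos hη) (sub_pos.2 hc)))
        (ball_subset_bergmanDisk hc η)
  have hF : ∀ c ∈ F, ‖c‖ ≤ Real.tanh ρ := fun c hc => by simpa using hFρ c hc
  refine ⟨F, hF, fun a ha z hz => ?_⟩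
  obtain ⟨hz, hza⟩ := (mem_bergmanDisk_iff ha).1 hz
  have hmz : mobius a z ∈ Metric.closedBall 0 (Real.tanh ρ) := by
    rw [mem_closedBall_zero_iff, norm_mobius]
    exact hza.le
  obtain ⟨c, hcF, hzc⟩ := mem_iUnion₂.1 (hcover hmz)
  exact mem_iUnion₂.2 ⟨c, hcF, (mobius_mem_bergmanDisk_iff ha hz
    ((hF c hcF).trans_lt hρ)).1 hzc⟩

end BergmanDisk

section Integrals

lemma m2_ball (c : ℂ) (R : ℝ) : m2 (Metric.ball c R) = ENNReal.ofReal R ^ 2 := by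
  rw [m2, Measure.smul_apply, Complex.volume_ball, smul_eq_mul, mul_comm, mul_assoc,
    ← ENNReal.ofReal_coe_nnreal, NNReal.coe_real_pi,
    ENNReal.mul_inv_cancel (by simp [Real.pi_pos]) ENNReal.ofReal_ne_top, mul_one]

lemma measurable_ofReal_one_sub_norm_rpow (β : ℝ) :
    Measurable fun w : ℂ => ENNReal.ofReal ((1 - ‖w‖) ^ β) := by
  fun_prop

lemma setLIntegral_inv_rpow_mA (α : ℝ) {S : Set ℂ} (hS : MeasurableSet S)
    (hSD : S ⊆ unitDisk) :
    ∫⁻ w in S, (ENNReal.ofReal ((1 - ‖w‖) ^ (α + 2)))⁻¹ ∂(mA α)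
      = ∫⁻ w in S, (ENNReal.ofReal ((1 - ‖w‖) ^ 2))⁻¹ ∂m2 := by
  rw [mA, setLIntegral_withDensity_eq_setLIntegral_mul _ (measurable_ofReal_one_sub_norm_rpow α)
    (g := fun w => (ENNReal.ofReal ((1 - ‖w‖) ^ (α + 2)))⁻¹) (by fun_prop) hS]
  refine setLIntegral_congr_fun hS fun w hw => ?_
  have hw : 0 < 1 - ‖w‖ := sub_pos.2 (mem_unitDisk.1 (hSD hw))
  have hα : ENNReal.ofReal ((1 - ‖w‖) ^ α) ≠ 0 := by
    simpa using Real.rpow_pos_of_pos hw α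
  rw [Pi.mul_apply, Real.rpow_add hw, Real.rpow_two,
    ENNReal.ofReal_mul (Real.rpow_nonneg hw.le α),
    ENNReal.mul_inv (Or.inl hα) (Or.inl ENNReal.ofReal_ne_top), ← mul_assoc,
    ENNReal.mul_inv_cancel hα ENNReal.ofReal_ne_top, one_mul]

lemma ofReal_le_setLIntegral_ball {a : ℂ} (ha : ‖a‖ < 1) {ε : ℝ} (hε₀ : 0 ≤ ε) (hε₁ : ε ≤ 1) :
    ENNReal.ofReal (ε ^ 2 / 4)
      ≤ ∫⁻ w in Metric.ball a (ε * (1 - ‖a‖)), (ENNReal.ofReal ((1 - ‖w‖) ^ 2))⁻¹ ∂m2 := by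
  set d := 1 - ‖a‖
  have hd : 0 < d := sub_pos.2 ha
  calc ENNReal.ofReal (ε ^ 2 / 4)
      = (ENNReal.ofReal ((2 * d) ^ 2))⁻¹ * ENNReal.ofReal (ε * d) ^ 2 := by
        rw [← ENNReal.ofReal_inv_of_pos (by positivity), ← ENNReal.ofReal_pow (by positivity),
          ← ENNReal.ofReal_mul (by positivity)]
        congr 1
        field_simp
        ring
    _ = ∫⁻ _ in Metric.ball a (ε * d), (ENNReal.ofReal ((2 * d) ^ 2))⁻¹ ∂m2 := by
        rw [setLIntegral_const, m2_ball]
    _ ≤ _ := by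
        refine setLIntegral_mono' measurableSet_ball fun w hw => ?_
        rw [Metric.mem_ball, dist_eq_norm] at hw
        have hwa : ‖a‖ ≤ ‖w‖ + ‖w - a‖ := by
          simpa [norm_sub_rev] using norm_add_le w (a - w)
        have hwa' : ‖w‖ ≤ ‖a‖ + ‖w - a‖ := by simpa using norm_add_le a (w - a)
        gcongr
        · nlinarith
        · nlinarith

lemma exists_setLIntegral_bergmanDisk_le {r : ℝ} (hr : 0 ≤ r) :
    ∃ C : ℝ, ∀ a : ℂ, ‖a‖ < 1 →
      ∫⁻ w in bergmanDisk a r, (ENNReal.ofReal ((1 - ‖w‖) ^ 2))⁻¹ ∂m2 ≤ ENNReal.ofReal C := by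
  set k := Real.tanh r
  set c := (1 - k ^ 2) / 4
  set R := 2 * k / (1 - k)
  have hc : 0 < c := by have := Real.tanh_sq_lt_one r; simp only [c]; linarith
  have hR : 0 ≤ R :=
    div_nonneg (mul_nonneg zero_le_two (Real.tanh_nonneg hr)) (sub_pos.2 (Real.tanh_lt_one r)).le
  refine ⟨(R / c) ^ 2, fun a ha => ?_⟩
  set d := 1 - ‖a‖
  have hd : 0 < d := sub_pos.2 ha
  calc ∫⁻ w in bergmanDisk a r, (ENNReal.ofReal ((1 - ‖w‖) ^ 2))⁻¹ ∂m2
      ≤ ∫⁻ _ in bergmanDisk a r, (ENNReal.ofReal ((c * d) ^ 2))⁻¹ ∂m2 := by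
        refine setLIntegral_mono' (measurableSet_bergmanDisk a r) fun w hw => ?_
        have := one_sub_norm_lt_of_mem_bergmanDisk ha hw
        gcongr
    _ = (ENNReal.ofReal ((c * d) ^ 2))⁻¹ * m2 (bergmanDisk a r) := setLIntegral_const _ _
    _ ≤ (ENNReal.ofReal ((c * d) ^ 2))⁻¹ * m2 (Metric.ball a (R * d)) := by
        gcongr
        exact bergmanDisk_subset_ball ha r
    _ = ENNReal.ofReal ((R / c) ^ 2) := by
        rw [m2_ball, ← ENNReal.ofReal_inv_of_pos (by positivity),
          ← ENNReal.ofReal_pow (by positivity),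
          ← ENNReal.ofReal_mul (by positivity)]
        congr 1
        field_simp

lemma setLIntegral_mul_measure_le {X Y : Type*} [MeasurableSpace X] [MeasurableSpace Y]
    {ν : Measure X} (μ : Measure Y) {A B : Set X} {E : Set Y} {G : X → ℝ≥0∞} {D : X → Set Y}
    (hB : MeasurableSet B) (hBA : B ⊆ A) (hE : ∀ w ∈ B, E ⊆ D w) :
    (∫⁻ w in B, G w ∂ν) * μ E ≤ ∫⁻ w in A, G w * μ (D w) ∂ν :=
  calc (∫⁻ w in B, G w ∂ν) * μ E
      ≤ ∫⁻ w in B, G w * μ E ∂ν := lintegral_mul_const_le _ _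
    _ ≤ ∫⁻ w in B, G w * μ (D w) ∂ν :=
        setLIntegral_mono' hB fun w hw => by gcongr; exact hE w hw
    _ ≤ ∫⁻ w in A, G w * μ (D w) ∂ν := lintegral_mono_set hBA

lemma ofReal_mul_measure_le_setLIntegral (α : ℝ) {η : ℝ} (hη : 0 ≤ η) (t : ℝ) (μ : Measure ℂ)
    {A E : Set ℂ} {w₀ : ℂ} (hw₀ : ‖w₀‖ < 1) (hA : bergmanDisk w₀ η ⊆ A)
    (hE : ∀ v ∈ bergmanDisk w₀ η, E ⊆ bergmanDisk v t) :
    ENNReal.ofReal (Real.tanh η ^ 2 / 4) * μ E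
      ≤ ∫⁻ w in A, (ENNReal.ofReal ((1 - ‖w‖) ^ (α + 2)))⁻¹ * μ (bergmanDisk w t) ∂(mA α) := by
  set B := Metric.ball w₀ (Real.tanh η * (1 - ‖w₀‖))
  have hBD : B ⊆ bergmanDisk w₀ η := ball_subset_bergmanDisk hw₀ η
  calc ENNReal.ofReal (Real.tanh η ^ 2 / 4) * μ E
      ≤ (∫⁻ w in B, (ENNReal.ofReal ((1 - ‖w‖) ^ (α + 2)))⁻¹ ∂(mA α)) * μ E := by
        rw [setLIntegral_inv_rpow_mA α measurableSet_ball (hBD.trans fun _ h => h.1)]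
        gcongr
        exact ofReal_le_setLIntegral_ball hw₀ (Real.tanh_nonneg hη) (Real.tanh_lt_one η).le
    _ ≤ _ := setLIntegral_mul_measure_le μ measurableSet_ball (hBD.trans hA)
        fun v hv => hE v (hBD hv)

lemma exists_setLIntegral_le_measure_bergmanDisk (α : ℝ) {r : ℝ} (hr : 0 ≤ r) (t : ℝ)
    (μ : Measure ℂ) :
    ∃ C : ℝ, 0 < C ∧ ∀ a : ℂ, ‖a‖ < 1 →
      ∫⁻ w in bergmanDisk a r,
          (ENNReal.ofReal ((1 - ‖w‖) ^ (α + 2)))⁻¹ * μ (bergmanDisk w t) ∂(mA α)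
        ≤ ENNReal.ofReal C * μ (bergmanDisk a (r + t)) := by
  obtain ⟨C, hC⟩ := exists_setLIntegral_bergmanDisk_le hr
  refine ⟨max C 1, by positivity, fun a ha => ?_⟩
  calc ∫⁻ w in bergmanDisk a r,
        (ENNReal.ofReal ((1 - ‖w‖) ^ (α + 2)))⁻¹ * μ (bergmanDisk w t) ∂(mA α)
      ≤ ∫⁻ w in bergmanDisk a r,
          (ENNReal.ofReal ((1 - ‖w‖) ^ (α + 2)))⁻¹ * μ (bergmanDisk a (r + t)) ∂(mA α) := by
        refine setLIntegral_mono' (measurableSet_bergmanDisk a r) fun w hw => ?_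
        gcongr
        exact bergmanDisk_subset_bergmanDisk (mem_unitDisk.1 hw.1) ha (by linarith [hw.2])
    _ = (∫⁻ w in bergmanDisk a r, (ENNReal.ofReal ((1 - ‖w‖) ^ (α + 2)))⁻¹ ∂(mA α))
          * μ (bergmanDisk a (r + t)) := lintegral_mul_const _ (by fun_prop)
    _ ≤ ENNReal.ofReal (max C 1) * μ (bergmanDisk a (r + t)) := by
        rw [setLIntegral_inv_rpow_mA α (measurableSet_bergmanDisk a r) fun _ h => h.1]
        gcongr
        exact (hC a ha).trans (ENNReal.ofReal_le_ofReal (le_max_left C 1))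

lemma ofReal_mul_measure_bergmanDisk_mobius_le {r s t η : ℝ} (hs : 0 ≤ s) (hη : 0 < η)
    (hηr : 2 * η ≤ r) (hηt : s + 4 * η ≤ t) (α : ℝ) (μ : Measure ℂ) {a c : ℂ} (ha : ‖a‖ < 1)
    (hc : ‖c‖ ≤ Real.tanh (r + s)) :
    ENNReal.ofReal (Real.tanh η ^ 2 / 4) * μ (bergmanDisk (mobius a c) η)
      ≤ ∫⁻ w in bergmanDisk a r,
          (ENNReal.ofReal ((1 - ‖w‖) ^ (α + 2)))⁻¹ * μ (bergmanDisk w t) ∂(mA α) := by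
  have hc₁ : ‖c‖ < 1 := hc.trans_lt (Real.tanh_lt_one _)
  have hc₀ : bergmanDist c 0 ≤ (r - 2 * η) + (s + 2 * η) := by
    have := Real.artanh_le_artanh (by linarith [norm_nonneg c]) (Real.tanh_lt_one _) hc
    rw [Real.artanh_tanh, ← bergmanDist_zero_right hc₁] at this
    linarith
  obtain ⟨w, hw, hw₀, hcw⟩ := exists_bergmanDist_le_of_le_add hc₁ (by linarith) (by linarith) hc₀
  have hw' := norm_mobius_lt_one ha hw
  have hc' := norm_mobius_lt_one ha hc₁
  have hwa : bergmanDist (mobius a w) a ≤ r - 2 * η := by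
    have := bergmanDist_mobius ha hw (norm_zero.trans_lt one_pos)
    rw [mobius_zero] at this
    exact this.trans_le hw₀
  have hcw' : bergmanDist (mobius a c) (mobius a w) ≤ s + 2 * η :=
    (bergmanDist_mobius ha hc₁ hw).trans_le hcw
  refine ofReal_mul_measure_le_setLIntegral α hη.le t μ hw'
    (bergmanDisk_subset_bergmanDisk hw' ha (by linarith)) fun v hv => ?_
  have hv₁ := mem_unitDisk.1 hv.1
  refine bergmanDisk_subset_bergmanDisk hc' hv₁ ?_
  linarith [bergmanDist_triangle hc' hv₁ hw', hv.2, bergmanDist_comm v (mobius a w)]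

lemma exists_measure_bergmanDisk_le_setLIntegral (α : ℝ) {r s t : ℝ} (hr : 0 < r) (hs : 0 < s)
    (hst : s < t) (μ : Measure ℂ) :
    ∃ C₁ : ℝ, 0 < C₁ ∧ ∀ a : ℂ, ‖a‖ < 1 →
      ENNReal.ofReal C₁ * μ (bergmanDisk a (r + s))
        ≤ ∫⁻ w in bergmanDisk a r,
            (ENNReal.ofReal ((1 - ‖w‖) ^ (α + 2)))⁻¹ * μ (bergmanDisk w t) ∂(mA α) := by
  set η := min r (t - s) / 4
  have hη : 0 < η := by positivity [sub_pos.2 hst]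
  have hηr : 2 * η ≤ r := by simp only [η]; linarith [min_le_left r (t - s)]
  have hηt : s + 4 * η ≤ t := by simp only [η]; linarith [min_le_right r (t - s)]
  obtain ⟨F, hF, hcover⟩ := exists_finset_bergmanDisk_cover (r + s) hη
  set c₀ := Real.tanh η ^ 2 / 4
  refine ⟨c₀ / (F.card + 1), by positivity [Real.tanh_pos hη], fun a ha => ?_⟩
  set I := ∫⁻ w in bergmanDisk a r,
    (ENNReal.ofReal ((1 - ‖w‖) ^ (α + 2)))⁻¹ * μ (bergmanDisk w t) ∂(mA α)
  have hsum : ENNReal.ofReal c₀ * μ (bergmanDisk a (r + s)) ≤ (F.card + 1) * I :=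
    calc ENNReal.ofReal c₀ * μ (bergmanDisk a (r + s))
        ≤ ENNReal.ofReal c₀ * ∑ c ∈ F, μ (bergmanDisk (mobius a c) η) := by
          gcongr
          exact (measure_mono (hcover a ha)).trans (measure_biUnion_finset_le F _)
      _ ≤ ∑ c ∈ F, I := by
          rw [Finset.mul_sum]
          exact Finset.sum_le_sum fun c hc =>
            ofReal_mul_measure_bergmanDisk_mobius_le hs.le hη hηr hηt α μ ha (hF c hc)
      _ ≤ (F.card + 1) * I := by
          rw [Finset.sum_const, nsmul_eq_mul]
          gcongr
          exact le_self_add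
  rw [ENNReal.ofReal_div_of_pos (by positivity), ENNReal.ofReal_add (Nat.cast_nonneg _) zero_le_one,
    ENNReal.ofReal_natCast, ENNReal.ofReal_one, ← ENNReal.mul_div_right_comm]
  exact ENNReal.div_le_of_le_mul' hsum

end Integrals

theorem statement7_general (α r s t : ℝ) (hr : 0 < r) (hs : 0 < s) (hst : s < t)
    (μ : Measure ℂ) :
    ∃ C₁ C : ℝ, 0 < C₁ ∧ 0 < C ∧ ∀ a ∈ unitDisk,
      (ENNReal.ofReal C₁ *
          ((ENNReal.ofReal ((1 - ‖a‖) ^ (α + 2)))⁻¹ * μ (bergmanDisk a (r + s)))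
        ≤ (ENNReal.ofReal ((1 - ‖a‖) ^ (α + 2)))⁻¹ *
          ∫⁻ w in bergmanDisk a r,
            (ENNReal.ofReal ((1 - ‖w‖) ^ (α + 2)))⁻¹ * μ (bergmanDisk w t) ∂(mA α))
      ∧ ((ENNReal.ofReal ((1 - ‖a‖) ^ (α + 2)))⁻¹ *
          ∫⁻ w in bergmanDisk a r,
            (ENNReal.ofReal ((1 - ‖w‖) ^ (α + 2)))⁻¹ * μ (bergmanDisk w t) ∂(mA α)
        ≤ ENNReal.ofReal C *
          ((ENNReal.ofReal ((1 - ‖a‖) ^ (α + 2)))⁻¹ * μ (bergmanDisk a (r + t)))) := by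
  obtain ⟨C₁, hC₁, hlower⟩ := exists_measure_bergmanDisk_le_setLIntegral α hr hs hst μ
  obtain ⟨C, hC, hupper⟩ := exists_setLIntegral_le_measure_bergmanDisk α hr.le t μ
  refine ⟨C₁, C, hC₁, hC, fun a ha => ⟨?_, ?_⟩⟩
  · rw [mul_left_comm]
    gcongr
    exact hlower a (mem_unitDisk.1 ha)
  · rw [mul_left_comm (ENNReal.ofReal C)]
    gcongr
    exact hupper a (mem_unitDisk.1 ha)

/-- Two-sided estimate for Bergman-disk averages of a measure: for `α > -1`, `r > 0`,
`0 < s < t`,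
`C₁ (1-|a|)^{-(α+2)} μ(D(a,r+s)) ≤ (1-|a|)^{-(α+2)} ∫_{D(a,r)} (1-|w|)^{-(α+2)} μ(D(w,t)) dm_α(w)
 ≤ C (1-|a|)^{-(α+2)} μ(D(a,r+t))` for all `a ∈ 𝔻`. -/
theorem statement7 (α r s t : ℝ) (hα : -1 < α) (hr : 0 < r) (hs : 0 < s) (hst : s < t)
    (μ : Measure ℂ) (hμ : μ unitDiskᶜ = 0) :
    ∃ C₁ C : ℝ, 0 < C₁ ∧ 0 < C ∧ ∀ a ∈ unitDisk,
      (ENNReal.ofReal C₁ *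
          ((ENNReal.ofReal ((1 - ‖a‖) ^ (α + 2)))⁻¹ * μ (bergmanDisk a (r + s)))
        ≤ (ENNReal.ofReal ((1 - ‖a‖) ^ (α + 2)))⁻¹ *
          ∫⁻ w in bergmanDisk a r,
            (ENNReal.ofReal ((1 - ‖w‖) ^ (α + 2)))⁻¹ * μ (bergmanDisk w t) ∂(mA α))
      ∧ ((ENNReal.ofReal ((1 - ‖a‖) ^ (α + 2)))⁻¹ *
          ∫⁻ w in bergmanDisk a r,
            (ENNReal.ofReal ((1 - ‖w‖) ^ (α + 2)))⁻¹ * μ (bergmanDisk w t) ∂(mA α)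
        ≤ ENNReal.ofReal C *
          ((ENNReal.ofReal ((1 - ‖a‖) ^ (α + 2)))⁻¹ * μ (bergmanDisk a (r + t)))) :=
  statement7_general α r s t hr hs hst μ
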